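/- Let R = ℚ[x₀,x₁,x₂] and let q : R → R⧸(e₁) be the quotient by the ideal generated by e₁ = x₀+x₁+x₂. Then the image under q of the set of alternating even polynomials of R is exactly the set of products q(Δ·e₃)·s where s ranges over the ℚ-subalgebra of R⧸(e₁) generated by q(e₂) and q(e₃)²; moreover q(Δ·e₃) ≠ 0 and multiplication by q(Δ·e₃) is injective on R⧸(e₁), so this image is a free module of rank one over that subalgebra, isomorphic to Δσ₃·ℚ[σ₂, σ₃²]. (This is the polynomial computation establishing Theorem 3.1 of the paper in the case n, j even.) -/

import Mathlib

set_option maxHeartbeats 2000000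
set_option synthInstance.maxHeartbeats 1000000


open MvPolynomial

/-- `R = ℚ[x₀,x₁,x₂]`. -/
abbrev R3 : Type := MvPolynomial (Fin 3) ℚ

/-- The `k`-th elementary symmetric polynomial in three variables. -/
noncomputable def sym3 (k : ℕ) : R3 := esymm (Fin 3) ℚ k

/-- The Vandermonde polynomial `Δ = (x₀-x₁)(x₀-x₂)(x₁-x₂)`. -/
noncomputable def Δ3 : R3 := (X 0 - X 1) * (X 0 - X 2) * (X 1 - X 2)

/-- The ideal generated by `e₁ = x₀ + x₁ + x₂`. -/
noncomputable def I3 : Ideal R3 := Ideal.span {sym3 1}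

/-- The quotient map `q : R → R⧸(e₁)`. -/
noncomputable def q3 : R3 →+* R3 ⧸ I3 := Ideal.Quotient.mk I3

/-- The ℚ-algebra automorphism sending each variable `xᵢ` to `-xᵢ`. -/
noncomputable def negVars3 : R3 →ₐ[ℚ] R3 := aeval fun i => -X i

/-- A polynomial is even if it is fixed by the substitution `xᵢ ↦ -xᵢ`. -/
def IsEven3 (p : R3) : Prop := negVars3 p = p

/-- A polynomial is alternating if each permutation of the variables acts on it
by the sign of the permutation. -/
def IsAlternating3 (p : R3) : Prop :=
  ∀ σ : Equiv.Perm (Fin 3), rename σ p = (Equiv.Perm.sign σ : ℤ) • p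

/-! ### Auxiliary material -/

abbrev R2' : Type := MvPolynomial (Fin 2) ℚ

lemma sym3_one : sym3 1 = X 0 + X 1 + X 2 := by
  rw [sym3, esymm]
  rw [show Finset.powersetCard 1 (Finset.univ : Finset (Fin 3)) = {{0},{1},{2}} from by decide]
  rw [Finset.sum_insert (by decide), Finset.sum_insert (by decide), Finset.sum_singleton]
  simp [add_assoc]

lemma sym3_two : sym3 2 = X 0 * X 1 + X 0 * X 2 + X 1 * X 2 := by
  rw [sym3, esymm]
  rw [show Finset.powersetCard 2 (Finset.univ : Finset (Fin 3)) = {{0,1},{0,2},{1,2}} from by decide]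
  rw [Finset.sum_insert (by decide), Finset.sum_insert (by decide), Finset.sum_singleton,
    Finset.prod_insert (by decide), Finset.prod_insert (by decide),
    Finset.prod_insert (by decide)]
  simp only [Finset.prod_singleton]
  ring

lemma sym3_three : sym3 3 = X 0 * X 1 * X 2 := by
  rw [sym3, esymm]
  rw [show Finset.powersetCard 3 (Finset.univ : Finset (Fin 3)) = {{0,1,2}} from by decide]
  rw [Finset.sum_singleton, Finset.prod_insert (by decide), Finset.prod_insert (by decide),
    Finset.prod_singleton, mul_assoc]

section KernelTrick
variable (t : R3) (f : R3 →ₐ[ℚ] R2') (β : R2' →ₐ[ℚ] R3)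

lemma mem_span_of_eq_zero (hcomp : ∀ i : Fin 3, β (f (X i)) - X i ∈ Ideal.span {t})
    (p : R3) (hp : f p = 0) : p ∈ Ideal.span {t} := by
  have key : (Ideal.Quotient.mkₐ ℚ (Ideal.span {t})).comp (β.comp f)
      = Ideal.Quotient.mkₐ ℚ (Ideal.span {t}) := by
    apply MvPolynomial.algHom_ext
    intro i
    simpa [Ideal.Quotient.mkₐ_eq_mk, Ideal.Quotient.eq] using hcomp i
  have := congrArg (fun g => g p) key
  simp only [AlgHom.comp_apply, hp, map_zero] at this
  have h2 : Ideal.Quotient.mk (Ideal.span {t}) p = 0 := by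
    rw [← Ideal.Quotient.mkₐ_eq_mk ℚ]; exact this.symm
  exact Ideal.Quotient.eq_zero_iff_mem.mp h2

lemma isDomain_quot (ht : f t = 0)
    (hcomp : ∀ i : Fin 3, β (f (X i)) - X i ∈ Ideal.span {t}) :
    IsDomain (R3 ⧸ Ideal.span {t}) := by
  have hker : ∀ a ∈ Ideal.span {t}, f.toRingHom a = 0 := by
    intro a ha
    obtain ⟨c, rfl⟩ := Ideal.mem_span_singleton.mp ha
    simp [ht]
  set L := Ideal.Quotient.lift (Ideal.span {t}) f.toRingHom hker with hL
  have hinj : Function.Injective L := by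
    intro a b hab
    obtain ⟨p, rfl⟩ := Ideal.Quotient.mk_surjective a
    obtain ⟨q, rfl⟩ := Ideal.Quotient.mk_surjective b
    rw [hL, Ideal.Quotient.lift_mk, Ideal.Quotient.lift_mk] at hab
    rw [Ideal.Quotient.eq]
    exact mem_span_of_eq_zero t f β hcomp _
      (by rw [map_sub]; simpa using sub_eq_zero_of_eq hab)
  exact hinj.isDomain L

end KernelTrick

noncomputable def fX01 : R3 →ₐ[ℚ] R2' := aeval ![X 0, X 0, X 1]
noncomputable def fX02 : R3 →ₐ[ℚ] R2' := aeval ![X 0, X 1, X 0]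
noncomputable def fX12 : R3 →ₐ[ℚ] R2' := aeval ![X 0, X 1, X 1]
noncomputable def fE1 : R3 →ₐ[ℚ] R2' := aeval ![X 0, X 1, -X 0 - X 1]
noncomputable def bX01 : R2' →ₐ[ℚ] R3 := aeval ![X 0, X 2]
noncomputable def bstd : R2' →ₐ[ℚ] R3 := aeval ![X 0, X 1]

lemma prime_X01 : Prime (X 0 - X 1 : R3) := by
  have hdom := isDomain_quot (X 0 - X 1) fX01 bX01 (by simp [fX01])
    (by intro i; fin_cases i <;> simp [fX01, bX01] <;> exact Ideal.subset_span rfl)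
  have hne : (X 0 - X 1 : R3) ≠ 0 := by
    intro h
    have := congrArg (eval ![1, 0, 0]) h
    simp at this
  rw [← Ideal.span_singleton_prime hne]
  exact Ideal.Quotient.isDomain_iff_prime _ |>.mp hdom

lemma prime_X02 : Prime (X 0 - X 2 : R3) := by
  have hdom := isDomain_quot (X 0 - X 2) fX02 bstd (by simp [fX02])
    (by intro i; fin_cases i <;> simp [fX02, bstd] <;> exact Ideal.subset_span rfl)
  have hne : (X 0 - X 2 : R3) ≠ 0 := by
    intro h
    have := congrArg (eval ![1, 0, 0]) h
    simp at this
  rw [← Ideal.span_singleton_prime hne]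
  exact Ideal.Quotient.isDomain_iff_prime _ |>.mp hdom

lemma prime_X12 : Prime (X 1 - X 2 : R3) := by
  have hdom := isDomain_quot (X 1 - X 2) fX12 bstd (by simp [fX12])
    (by intro i; fin_cases i <;> simp [fX12, bstd] <;> exact Ideal.subset_span rfl)
  have hne : (X 1 - X 2 : R3) ≠ 0 := by
    intro h
    have := congrArg (eval ![0, 1, 0]) h
    simp at this
  rw [← Ideal.span_singleton_prime hne]
  exact Ideal.Quotient.isDomain_iff_prime _ |>.mp hdom

lemma isDomain_quot_I3 : IsDomain (R3 ⧸ I3) := by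
  have : IsDomain (R3 ⧸ Ideal.span {sym3 1}) := by
    refine isDomain_quot (sym3 1) fE1 bstd (by simp [fE1, sym3_one]) ?_
    intro i
    fin_cases i <;> simp [fE1, bstd]
    have : -X 0 - X 1 - X 2 = -(sym3 1 : R3) := by rw [sym3_one]; ring
    rw [this]
    exact neg_mem (Ideal.subset_span rfl)
  exact this

/-! ### Divisibility by the Vandermonde factors -/

lemma fse_X0 : finSuccEquiv ℚ 2 (X 0 : R3) = Polynomial.X := finSuccEquiv_X_zero
lemma fse_X1 : finSuccEquiv ℚ 2 (X 1 : R3) = Polynomial.C (X 0) := by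
  rw [show (X (1 : Fin 3) : R3) = X ((0 : Fin 2).succ) from rfl, finSuccEquiv_X_succ]
lemma fse_X2 : finSuccEquiv ℚ 2 (X 2 : R3) = Polynomial.C (X 1) := by
  rw [show (X (2 : Fin 3) : R3) = X ((1 : Fin 2).succ) from rfl, finSuccEquiv_X_succ]

lemma evalpoly_finSuccEquiv (p : R3) :
    Polynomial.eval (X 0 : R2') (finSuccEquiv ℚ 2 p) = fX01 p := by
  have : ((Polynomial.aeval (X 0 : R2')).restrictScalars ℚ).comp (finSuccEquiv ℚ 2).toAlgHom
      = fX01 := by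
    apply MvPolynomial.algHom_ext
    intro i
    fin_cases i <;>
      simp [fse_X0, fse_X1, fse_X2, fX01]
  have h := congrArg (fun g => g p) this
  simp only [AlgHom.comp_apply, AlgHom.coe_restrictScalars', AlgEquiv.toAlgHom_eq_coe,
    AlgHom.coe_coe] at h
  rw [← Polynomial.coe_aeval_eq_eval]
  exact h

lemma dvd_of_fX01_eq_zero (p : R3) (h : fX01 p = 0) : (X 0 - X 1 : R3) ∣ p := by
  have hroot : Polynomial.IsRoot (finSuccEquiv ℚ 2 p) (X 0 : R2') := by
    rw [Polynomial.IsRoot, evalpoly_finSuccEquiv, h]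
  have hdvd : (Polynomial.X - Polynomial.C (X 0 : R2')) ∣ finSuccEquiv ℚ 2 p :=
    Polynomial.dvd_iff_isRoot.mpr hroot
  have himg : finSuccEquiv ℚ 2 (X 0 - X 1 : R3) = Polynomial.X - Polynomial.C (X 0 : R2') := by
    rw [map_sub, fse_X0, fse_X1]
  have := map_dvd (finSuccEquiv ℚ 2).symm.toAlgHom (himg ▸ hdvd)
  simpa using this

/-! ### Alternating polynomials -/

lemma perm3_cases (σ : Equiv.Perm (Fin 3)) :
    σ = 1 ∨ σ = Equiv.swap 0 1 ∨ σ = Equiv.swap 0 2 ∨ σ = Equiv.swap 1 2 ∨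
    σ = Equiv.swap 0 1 * Equiv.swap 1 2 ∨ σ = Equiv.swap 1 2 * Equiv.swap 0 1 := by
  revert σ; decide

lemma rename_delta (σ : Equiv.Perm (Fin 3)) :
    rename σ Δ3 = (Equiv.Perm.sign σ : ℤ) • Δ3 := by
  have expand : ∀ τ : Equiv.Perm (Fin 3),
      rename τ Δ3 = (X (τ 0) - X (τ 1)) * (X (τ 0) - X (τ 2)) * (X (τ 1) - X (τ 2)) := by
    intro τ
    simp [Δ3, map_mul, map_sub, rename_X]
  rcases perm3_cases σ with h | h | h | h | h | h <;> subst h <;> rw [expand]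
  · rw [show ((Equiv.Perm.sign (1 : Equiv.Perm (Fin 3)) : ℤˣ) : ℤ) = 1 from by decide,
      one_smul]
    norm_num [Δ3]
  · rw [show ((Equiv.swap (0:Fin 3) 1) 0) = 1 from by decide,
      show ((Equiv.swap (0:Fin 3) 1) 1) = 0 from by decide,
      show ((Equiv.swap (0:Fin 3) 1) 2) = 2 from by decide,
      show ((Equiv.Perm.sign (Equiv.swap (0:Fin 3) 1) : ℤˣ) : ℤ) = -1 from by decide,
      neg_one_zsmul, Δ3]
    ring
  · rw [show ((Equiv.swap (0:Fin 3) 2) 0) = 2 from by decide,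
      show ((Equiv.swap (0:Fin 3) 2) 1) = 1 from by decide,
      show ((Equiv.swap (0:Fin 3) 2) 2) = 0 from by decide,
      show ((Equiv.Perm.sign (Equiv.swap (0:Fin 3) 2) : ℤˣ) : ℤ) = -1 from by decide,
      neg_one_zsmul, Δ3]
    ring
  · rw [show ((Equiv.swap (1:Fin 3) 2) 0) = 0 from by decide,
      show ((Equiv.swap (1:Fin 3) 2) 1) = 2 from by decide,
      show ((Equiv.swap (1:Fin 3) 2) 2) = 1 from by decide,
      show ((Equiv.Perm.sign (Equiv.swap (1:Fin 3) 2) : ℤˣ) : ℤ) = -1 from by decide,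
      neg_one_zsmul, Δ3]
    ring
  · rw [show ((Equiv.swap 0 1 * Equiv.swap 1 2 : Equiv.Perm (Fin 3)) 0) = 1 from by decide,
      show ((Equiv.swap 0 1 * Equiv.swap 1 2 : Equiv.Perm (Fin 3)) 1) = 2 from by decide,
      show ((Equiv.swap 0 1 * Equiv.swap 1 2 : Equiv.Perm (Fin 3)) 2) = 0 from by decide,
      show ((Equiv.Perm.sign (Equiv.swap 0 1 * Equiv.swap 1 2 : Equiv.Perm (Fin 3)) : ℤˣ) : ℤ)
        = 1 from by decide,
      one_smul, Δ3]
    ring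
  · rw [show ((Equiv.swap 1 2 * Equiv.swap 0 1 : Equiv.Perm (Fin 3)) 0) = 2 from by decide,
      show ((Equiv.swap 1 2 * Equiv.swap 0 1 : Equiv.Perm (Fin 3)) 1) = 0 from by decide,
      show ((Equiv.swap 1 2 * Equiv.swap 0 1 : Equiv.Perm (Fin 3)) 2) = 1 from by decide,
      show ((Equiv.Perm.sign (Equiv.swap 1 2 * Equiv.swap 0 1 : Equiv.Perm (Fin 3)) : ℤˣ) : ℤ)
        = 1 from by decide,
      one_smul, Δ3]
    ring

lemma delta_ne_zero : (Δ3 : R3) ≠ 0 := by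
  intro h
  have := congrArg (eval ![2, 1, 0]) h
  norm_num [Δ3] at this
  simp [Matrix.cons_val] at this

lemma dvd01_of_alternating (p : R3) (hp : IsAlternating3 p) : (X 0 - X 1 : R3) ∣ p := by
  apply dvd_of_fX01_eq_zero
  have hs := hp (Equiv.swap 0 1)
  rw [show ((Equiv.Perm.sign (Equiv.swap (0:Fin 3) 1) : ℤˣ) : ℤ) = -1 from by decide,
    neg_one_zsmul] at hs
  have hfun : (![X 0, X 0, X 1] : Fin 3 → R2') ∘ ⇑(Equiv.swap (0:Fin 3) 1)
      = ![X 0, X 0, X 1] := by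
    funext i
    fin_cases i <;>
      simp [Function.comp,
        show ((Equiv.swap (0:Fin 3) 1) 0) = 1 from by decide,
        show ((Equiv.swap (0:Fin 3) 1) 1) = 0 from by decide,
        show ((Equiv.swap (0:Fin 3) 1) 2) = 2 from by decide]
  have hcomp : fX01 (rename (⇑(Equiv.swap (0:Fin 3) 1)) p) = fX01 p := by
    rw [fX01, aeval_rename, hfun]
  rw [hs, map_neg] at hcomp
  have h2 : fX01 p + fX01 p = 0 := by
    nth_rewrite 1 [← hcomp]
    exact neg_add_cancel _
  rw [← two_mul] at h2
  rcases mul_eq_zero.mp h2 with h | h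
  · exact absurd h two_ne_zero
  · exact h

lemma exists_sym_factor (p : R3) (hp : IsAlternating3 p) :
    ∃ g : R3, p = Δ3 * g ∧ g.IsSymmetric := by
  -- divisibility by the three factors
  have h01 : (X 0 - X 1 : R3) ∣ p := dvd01_of_alternating p hp
  have h02 : (X 0 - X 2 : R3) ∣ p := by
    have hs := hp (Equiv.swap 1 2)
    rw [show ((Equiv.Perm.sign (Equiv.swap (1:Fin 3) 2) : ℤˣ) : ℤ) = -1 from by decide,
      neg_one_zsmul] at hs
    have := map_dvd (rename (⇑(Equiv.swap (1:Fin 3) 2)) : R3 →ₐ[ℚ] R3) h01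
    rw [hs] at this
    rw [map_sub, rename_X, rename_X] at this
    rw [show ((Equiv.swap (1:Fin 3) 2) 0) = 0 from by decide,
      show ((Equiv.swap (1:Fin 3) 2) 1) = 2 from by decide] at this
    exact (dvd_neg).mp this
  have h12 : (X 1 - X 2 : R3) ∣ p := by
    have hs := hp (Equiv.swap 0 1 * Equiv.swap 1 2)
    rw [show ((Equiv.Perm.sign (Equiv.swap 0 1 * Equiv.swap 1 2 : Equiv.Perm (Fin 3)) : ℤˣ) : ℤ)
        = 1 from by decide, one_smul] at hs
    have := map_dvd (rename (⇑(Equiv.swap 0 1 * Equiv.swap 1 2 : Equiv.Perm (Fin 3))) :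
      R3 →ₐ[ℚ] R3) h01
    rw [hs] at this
    rw [map_sub, rename_X, rename_X] at this
    rw [show ((Equiv.swap 0 1 * Equiv.swap 1 2 : Equiv.Perm (Fin 3)) 0) = 1 from by decide,
      show ((Equiv.swap 0 1 * Equiv.swap 1 2 : Equiv.Perm (Fin 3)) 1) = 2 from by decide] at this
    exact this
  -- combine into divisibility by Δ3
  obtain ⟨a, ha⟩ := h01
  have hnd1 : ¬ (X 0 - X 2 : R3) ∣ (X 0 - X 1) := by
    rintro ⟨c, hc⟩
    have := congrArg (eval ![1, 0, 1]) hc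
    simp at this
  have h02' : (X 0 - X 2 : R3) ∣ a := by
    rcases (prime_X02.dvd_mul).mp (ha ▸ h02) with h | h
    · exact absurd h hnd1
    · exact h
  obtain ⟨b, hb⟩ := h02'
  have hnd2 : ¬ (X 1 - X 2 : R3) ∣ (X 0 - X 1) := by
    rintro ⟨c, hc⟩
    have := congrArg (eval ![0, 1, 1]) hc
    simp at this
  have hnd3 : ¬ (X 1 - X 2 : R3) ∣ (X 0 - X 2) := by
    rintro ⟨c, hc⟩
    have := congrArg (eval ![0, 1, 1]) hc
    simp at this
  have h12' : (X 1 - X 2 : R3) ∣ b := by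
    have hp' : p = (X 0 - X 1) * ((X 0 - X 2) * b) := by rw [ha, hb]
    rcases (prime_X12.dvd_mul).mp (hp' ▸ h12) with h | h
    · exact absurd h hnd2
    · rcases (prime_X12.dvd_mul).mp h with h' | h'
      · exact absurd h' hnd3
      · exact h'
  obtain ⟨g, hg⟩ := h12'
  refine ⟨g, ?_, ?_⟩
  · rw [ha, hb, hg, Δ3]; ring
  · -- g is symmetric
    have hpg : p = Δ3 * g := by rw [ha, hb, hg, Δ3]; ring
    intro σ
    have hs := hp σ
    rw [hpg, map_mul, rename_delta] at hs
    rcases Int.units_eq_one_or (Equiv.Perm.sign σ) with h | h <;> rw [h] at hs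
    · simp only [Units.val_one, one_smul] at hs
      exact mul_left_cancel₀ delta_ne_zero hs
    · simp only [Units.val_neg, Units.val_one, neg_one_zsmul, neg_mul, smul_neg] at hs
      have := neg_injective hs
      exact mul_left_cancel₀ delta_ne_zero this

/-! ### Parity facts -/

lemma sym3_symm (k : ℕ) : (sym3 k).IsSymmetric := esymm_isSymmetric _ _ _

lemma negVars3_X (i : Fin 3) : negVars3 (X i) = -X i := by simp [negVars3]

lemma negVars3_sym1 : negVars3 (sym3 1) = -sym3 1 := by
  rw [sym3_one]; simp [negVars3]; try ring
lemma negVars3_sym2 : negVars3 (sym3 2) = sym3 2 := by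
  rw [sym3_two]; simp [negVars3]; try ring
lemma negVars3_sym3 : negVars3 (sym3 3) = -sym3 3 := by
  rw [sym3_three]; simp [negVars3]; try ring
lemma negVars3_delta : negVars3 Δ3 = -Δ3 := by
  rw [Δ3]; simp [negVars3]; try ring

/-- The automorphism of the quotient induced by `negVars3`. -/
noncomputable def nu3 : R3 ⧸ I3 →ₐ[ℚ] R3 ⧸ I3 :=
  Ideal.Quotient.liftₐ I3 ((Ideal.Quotient.mkₐ ℚ I3).comp negVars3) (by
    intro a ha
    obtain ⟨c, rfl⟩ := Ideal.mem_span_singleton.mp ha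
    simp only [AlgHom.comp_apply, map_mul, negVars3_sym1, Ideal.Quotient.mkₐ_eq_mk]
    have : Ideal.Quotient.mk I3 (-sym3 1) = 0 := by
      rw [Ideal.Quotient.eq_zero_iff_mem]
      exact neg_mem (Ideal.subset_span rfl)
    rw [this, zero_mul])

lemma nu3_mk (p : R3) : nu3 (Ideal.Quotient.mk I3 p) = Ideal.Quotient.mk I3 (negVars3 p) := by
  simp [nu3, Ideal.Quotient.liftₐ_apply, Ideal.Quotient.lift_mk]
  rfl

lemma q3_eq_mk : ⇑q3 = ⇑(Ideal.Quotient.mk I3) := rfl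

lemma q3_ne_zero_of_eval (r : R3) (h : eval ![2, 1, -3] r ≠ 0) : q3 r ≠ 0 := by
  intro h0
  have hmem : r ∈ I3 := by
    rw [← Ideal.Quotient.eq_zero_iff_mem]
    exact h0
  obtain ⟨c, rfl⟩ := Ideal.mem_span_singleton.mp hmem
  apply h
  rw [map_mul]
  have : eval ![2, 1, -3] (sym3 1) = 0 := by rw [sym3_one]; simp; ring
  rw [this, zero_mul]

lemma q3_delta_sym3_ne : q3 (Δ3 * sym3 3) ≠ 0 := by
  apply q3_ne_zero_of_eval
  rw [map_mul, sym3_three, Δ3]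
  simp
  norm_num

lemma q3_delta_ne : q3 Δ3 ≠ 0 := by
  apply q3_ne_zero_of_eval
  rw [Δ3]
  simp
  norm_num

/-! ### Main theorem -/

/-- The alternating even polynomials in three variables, modulo the relation
`x₀ + x₁ + x₂ = 0`, form the free rank-one module `Δσ₃ · ℚ[σ₂, σ₃²]`: the image of the set
of alternating even polynomials under the quotient map is the set of multiples of
`q(Δ·e₃)` by elements of the subalgebra generated by `q(e₂)` and `q(e₃)²`; moreover
`q(Δ·e₃) ≠ 0` and multiplication by `q(Δ·e₃)` is injective on `R⧸(e₁)`.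
(Theorem 3.1 of the paper, case `n`, `j` even.) -/
theorem alternating_even_mod_e1 :
    (⇑q3 '' {p : R3 | IsAlternating3 p ∧ IsEven3 p}
      = {x : R3 ⧸ I3 | ∃ s ∈ Algebra.adjoin ℚ ({q3 (sym3 2), q3 (sym3 3) ^ 2} : Set (R3 ⧸ I3)),
          x = q3 (Δ3 * sym3 3) * s})
    ∧ q3 (Δ3 * sym3 3) ≠ 0
    ∧ Function.Injective (fun x : R3 ⧸ I3 => q3 (Δ3 * sym3 3) * x) := by
  haveI hdom : IsDomain (R3 ⧸ I3) := isDomain_quot_I3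
  set S : Subalgebra ℚ (R3 ⧸ I3) :=
    Algebra.adjoin ℚ ({q3 (sym3 2), q3 (sym3 3) ^ 2} : Set (R3 ⧸ I3)) with hS
  set u : R3 ⧸ I3 := q3 (sym3 2) with hu
  set v : R3 ⧸ I3 := q3 (sym3 3) with hv
  refine ⟨?_, q3_delta_sym3_ne, mul_right_injective₀ q3_delta_sym3_ne⟩
  apply Set.eq_of_subset_of_subset
  · -- hard direction
    rintro x ⟨p, ⟨halt, heven⟩, rfl⟩
    obtain ⟨g, hpg, hgsym⟩ := exists_sym_factor p halt
    -- fundamental theorem of symmetric polynomials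
    obtain ⟨F, hF⟩ := esymmAlgHom_fin_surjective (R := ℚ) (n := 3) (m := 3) le_rfl
      ⟨g, (mem_symmetricSubalgebra g).mpr hgsym⟩
    have hgF : g = aeval (fun i : Fin 3 => esymm (Fin 3) ℚ (i + 1)) F := by
      rw [← esymmAlgHom_apply, hF]
    -- push to quotient
    set w : Fin 3 → R3 ⧸ I3 := fun i => Ideal.Quotient.mk I3 (esymm (Fin 3) ℚ (i + 1)) with hw
    have hmkg : Ideal.Quotient.mk I3 g = aeval w F := by
      rw [hgF]
      have := congrArg (fun φ => φ F)
        (comp_aeval (φ := Ideal.Quotient.mkₐ ℚ I3)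
          (f := fun i : Fin 3 => esymm (Fin 3) ℚ (i + 1)))
      simpa [Ideal.Quotient.mkₐ_eq_mk] using this
    have hw0 : w 0 = 0 := by
      rw [hw]
      show Ideal.Quotient.mk I3 (esymm (Fin 3) ℚ 1) = 0
      rw [Ideal.Quotient.eq_zero_iff_mem]
      exact Ideal.subset_span rfl
    have hw1 : w 1 = u := rfl
    have hw2 : w 2 = v := rfl
    -- the "negated" system
    set w' : Fin 3 → R3 ⧸ I3 := ![0, u, -v] with hw'
    have hnuw : ∀ i, nu3 (w i) = w' i := by
      intro i
      fin_cases i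
      · show nu3 (w 0) = (0 : R3 ⧸ I3)
        rw [hw0, map_zero]
      · show nu3 (Ideal.Quotient.mk I3 (esymm (Fin 3) ℚ 2)) = u
        rw [nu3_mk, show esymm (Fin 3) ℚ 2 = sym3 2 from rfl, negVars3_sym2]; rfl
      · show nu3 (Ideal.Quotient.mk I3 (esymm (Fin 3) ℚ 3)) = -v
        rw [nu3_mk, show esymm (Fin 3) ℚ 3 = sym3 3 from rfl, negVars3_sym3, map_neg]; rfl
    have hnu_aeval : nu3 (aeval w F) = aeval w' F := by
      have h1 := congrArg (fun φ => φ F) (comp_aeval (φ := nu3) (f := w))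
      simp only [AlgHom.comp_apply] at h1
      rw [h1]
      exact congrArg (fun z => aeval z F) (funext hnuw)
    -- parity relation
    have hkey : aeval w' F = -aeval w F := by
      have hq : q3 p = q3 Δ3 * Ideal.Quotient.mk I3 g := by
        rw [hpg, q3_eq_mk, map_mul]
      have heq : nu3 (q3 p) = q3 p := by
        rw [q3_eq_mk, nu3_mk, heven]
      rw [hq, map_mul] at heq
      have hnud : nu3 (q3 Δ3) = -q3 Δ3 := by
        rw [q3_eq_mk, nu3_mk, negVars3_delta, map_neg]
      rw [hnud, hmkg, hnu_aeval] at heq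
      have : q3 Δ3 * (aeval w' F + aeval w F) = 0 := by
        rw [mul_add]
        linear_combination -heq
      rcases mul_eq_zero.mp this with h | h
      · exact absurd h q3_delta_ne
      · exact eq_neg_of_add_eq_zero_left h
    -- decompose into monomials
    have h2 : algebraMap ℚ (R3 ⧸ I3) (2⁻¹ : ℚ) * 2 = 1 := by
      rw [show (2 : R3 ⧸ I3) = algebraMap ℚ (R3 ⧸ I3) (2 : ℚ) from (map_ofNat _ 2).symm,
        ← map_mul]
      norm_num
    have hsum : ∀ z : Fin 3 → R3 ⧸ I3,
        aeval z F = ∑ m ∈ F.support, aeval z (monomial m (coeff m F)) := by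
      intro z
      conv_lhs => rw [as_sum F]
      rw [map_sum]
    have hhalf : Ideal.Quotient.mk I3 g
        = ∑ m ∈ F.support, algebraMap ℚ (R3 ⧸ I3) (2⁻¹ : ℚ)
            * (aeval w (monomial m (coeff m F)) - aeval w' (monomial m (coeff m F))) := by
      rw [← Finset.mul_sum, Finset.sum_sub_distrib, ← hsum w, ← hsum w', hkey,
        sub_neg_eq_add, ← two_mul, ← mul_assoc, h2, one_mul, hmkg]
    set sfun : (Fin 3 →₀ ℕ) → R3 ⧸ I3 := fun m =>
      if m 0 = 0 ∧ Odd (m 2) then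
        algebraMap ℚ (R3 ⧸ I3) (coeff m F) * (u ^ m 1 * (v ^ 2) ^ ((m 2 - 1) / 2))
      else 0 with hsfun
    have hsS : ∑ m ∈ F.support, sfun m ∈ S := by
      apply Subalgebra.sum_mem
      intro m _
      rw [hsfun]
      dsimp only
      split_ifs with hcond
      · refine Subalgebra.mul_mem _ (Subalgebra.algebraMap_mem S _) ?_
        refine Subalgebra.mul_mem _ ?_ ?_
        · exact Subalgebra.pow_mem _ (Algebra.subset_adjoin (Set.mem_insert _ _)) _
        · exact Subalgebra.pow_mem _ (Algebra.subset_adjoin (Set.mem_insert_of_mem _ (Set.mem_singleton _))) _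
      · exact Subalgebra.zero_mem _
    have hterm : ∀ m ∈ F.support, algebraMap ℚ (R3 ⧸ I3) (2⁻¹ : ℚ)
        * (aeval w (monomial m (coeff m F)) - aeval w' (monomial m (coeff m F)))
        = v * sfun m := by
      intro m _
      have hwm : aeval w (monomial m (coeff m F))
          = algebraMap ℚ (R3 ⧸ I3) (coeff m F) * (w 0 ^ m 0 * (w 1 ^ m 1 * w 2 ^ m 2)) := by
        rw [aeval_monomial]
        congr 1
        rw [Finsupp.prod_fintype _ _ (fun i => pow_zero (w i)), Fin.prod_univ_three]
        ring
      have hwm' : aeval w' (monomial m (coeff m F))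
          = algebraMap ℚ (R3 ⧸ I3) (coeff m F) * (w' 0 ^ m 0 * (w' 1 ^ m 1 * w' 2 ^ m 2)) := by
        rw [aeval_monomial]
        congr 1
        rw [Finsupp.prod_fintype _ _ (fun i => pow_zero (w' i)), Fin.prod_univ_three]
        ring
      rcases Nat.eq_zero_or_pos (m 0) with hm0 | hm0
      · rcases Nat.even_or_odd (m 2) with he | ho
        · -- even exponent of x₂ : the two terms agree
          have hneg : ((-v) : R3 ⧸ I3) ^ m 2 = v ^ m 2 := by
            obtain ⟨t, ht⟩ := he
            rw [ht, ← two_mul, pow_mul, pow_mul]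
            congr 1
            ring
          have hzero : sfun m = 0 := by
            rw [hsfun]
            dsimp only
            rw [if_neg]
            rintro ⟨-, hodd⟩
            exact (Nat.not_odd_iff_even.mpr he) hodd
          rw [hzero, mul_zero, hwm, hwm', hw0, hw1, hw2, show w' 0 = 0 from rfl,
            show w' 1 = u from rfl, show w' 2 = -v from rfl, hneg, sub_self, mul_zero]
        · -- odd exponent of x₂
          obtain ⟨t, ht⟩ := ho
          have hdiv : (m 2 - 1) / 2 = t := by omega
          have hcondtrue : sfun m
              = algebraMap ℚ (R3 ⧸ I3) (coeff m F) * (u ^ m 1 * (v ^ 2) ^ t) := by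
            rw [hsfun]
            dsimp only
            rw [if_pos ⟨hm0, ⟨t, ht⟩⟩, hdiv]
          have hneg : ((-v) : R3 ⧸ I3) ^ m 2 = -(v ^ m 2) := Odd.neg_pow ⟨t, ht⟩ v
          have hvp : (v : R3 ⧸ I3) ^ m 2 = v * (v ^ 2) ^ t := by
            rw [ht, pow_succ, pow_mul]
            ring
          rw [hwm, hwm', hw0, hw1, hw2, show w' 0 = 0 from rfl, show w' 1 = u from rfl,
            show w' 2 = -v from rfl, hm0, pow_zero, hneg, hvp, hcondtrue]
          rw [show algebraMap ℚ (R3 ⧸ I3) (coeff m F) * (1 * (u ^ m 1 * (v * (v ^ 2) ^ t)))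
              - algebraMap ℚ (R3 ⧸ I3) (coeff m F) * (1 * (u ^ m 1 * -(v * (v ^ 2) ^ t)))
              = 2 * (algebraMap ℚ (R3 ⧸ I3) (coeff m F) * (u ^ m 1 * (v * (v ^ 2) ^ t)))
            from by ring, ← mul_assoc, h2, one_mul]
          ring
      · -- the exponent of x₀ is positive : both terms vanish
        have hzero : sfun m = 0 := by
          rw [hsfun]
          dsimp only
          rw [if_neg]
          rintro ⟨h0, -⟩
          omega
        rw [hzero, mul_zero, hwm, hwm', hw0, show w' 0 = 0 from rfl]
        simp only [zero_pow (show m 0 ≠ 0 from by omega), zero_mul, mul_zero, sub_self]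
    have hfinal : Ideal.Quotient.mk I3 g = v * ∑ m ∈ F.support, sfun m := by
      rw [hhalf, Finset.mul_sum]
      exact Finset.sum_congr rfl hterm
    refine ⟨∑ m ∈ F.support, sfun m, hsS, ?_⟩
    rw [hpg, map_mul, map_mul, show q3 g = Ideal.Quotient.mk I3 g from rfl, hfinal, ← hv,
      ← mul_assoc]
  · -- easy direction
    rintro x ⟨s, hsS, rfl⟩
    have himg : ({q3 (sym3 2), q3 (sym3 3) ^ 2} : Set (R3 ⧸ I3))
        = ⇑(Ideal.Quotient.mkₐ ℚ I3) '' {sym3 2, sym3 3 ^ 2} := by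
      rw [Set.image_insert_eq, Set.image_singleton]
      simp [q3_eq_mk, Ideal.Quotient.mkₐ_eq_mk, map_pow]
    rw [hS, himg, ← AlgHom.map_adjoin] at hsS
    obtain ⟨r, hr, hrs⟩ := Subalgebra.mem_map.mp hsS
    -- r is symmetric and even
    have hprop : r.IsSymmetric ∧ IsEven3 r := by
      refine Algebra.adjoin_induction ?_ ?_ ?_ ?_ hr
      · rintro y (rfl | rfl)
        · exact ⟨sym3_symm 2, negVars3_sym2⟩
        · constructor
          · intro σ
            rw [map_pow, sym3_symm 3 σ]
          · show negVars3 _ = _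
            rw [map_pow, negVars3_sym3, neg_sq]
      · intro c
        constructor
        · intro σ; simp [IsSymmetric]
        · show negVars3 _ = _
          simp [negVars3]
      · rintro a b - - ⟨ha1, ha2⟩ ⟨hb1, hb2⟩
        exact ⟨fun σ => by rw [map_add, ha1 σ, hb1 σ],
          by rw [IsEven3] at *; rw [map_add, ha2, hb2]⟩
      · rintro a b - - ⟨ha1, ha2⟩ ⟨hb1, hb2⟩
        exact ⟨fun σ => by rw [map_mul, ha1 σ, hb1 σ],
          by rw [IsEven3] at *; rw [map_mul, ha2, hb2]⟩
    refine ⟨Δ3 * sym3 3 * r, ⟨?_, ?_⟩, ?_⟩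
    · intro σ
      rw [map_mul, map_mul, rename_delta, hprop.1 σ, sym3_symm 3 σ,
        smul_mul_assoc, smul_mul_assoc]
    · show negVars3 _ = _
      rw [map_mul, map_mul, negVars3_delta, negVars3_sym3, hprop.2]
      ring
    · rw [← hrs]
      exact map_mul q3 (Δ3 * sym3 3) r
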